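/- For all real x, the difference of derivatives |PTSoftplus'(x) − Softplus'(x)| ≤ 1/(1 + e^{x_c}) ≤ 0.371, where Softplus'(x) = e^x/(1+e^x) is the sigmoid and PTSoftplus'(x) = (ln 2)·2^x for x < x_c and 1 for x ≥ x_c. -/

import Mathlib

noncomputable section
open Real

def xc : ℝ := Real.logb 2 (1 / Real.log 2)
def PTSoftplus' (x : ℝ) : ℝ := if x < xc then Real.log 2 * (2:ℝ) ^ x else 1
def sigmoid (x : ℝ) : ℝ := Real.exp x / (1 + Real.exp x)

/-! Write `σ` for the sigmoid. For `x ≥ xc` the difference is `1 - σ x = σ (-x) ≤ σ (-xc)`.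
For `x < xc` both bounds come from weighted AM–GM, `t ^ p ≤ p t + (1 - p)` for `0 ≤ p ≤ 1`.
Splitting `eˣ = (eˣ) ^ (1 - log 2) · 2ˣ` and using `1 - log 2 ≤ log 2` gives `σ x ≤ log 2 · 2ˣ`.
With `s = σ xc` and `t = exp (x - xc) ≤ 1` one has `log 2 · 2ˣ = t ^ log 2 ≤ t ^ s ≤ s t + (1 - s)`
(as `s ≤ log 2`) while `σ x ≥ s t`, so the difference is at most `1 - s = σ (-xc)`.
The numerical facts `s ≤ log 2` and `σ (-xc) ≤ 0.371` follow from `28 / 53 ≤ xc ≤ 2 / 3`. -/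

namespace Real

lemma rpow_le_mul_add_one_sub {t p : ℝ} (ht : 0 ≤ t) (hp₀ : 0 ≤ p) (hp₁ : p ≤ 1) :
    t ^ p ≤ p * t + (1 - p) := by
  have := rpow_one_add_le_one_add_mul_self (s := t - 1) (by linarith) hp₀ hp₁
  rw [add_sub_cancel] at this
  linarith

lemma rpow_eq_exp_rpow_log {b : ℝ} (hb : 0 < b) (x : ℝ) : b ^ x = exp x ^ log b := by
  rw [rpow_def_of_pos hb, ← exp_mul, mul_comm]

lemma sigmoid_eq_exp_div (x : ℝ) : sigmoid x = exp x / (1 + exp x) := by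
  rw [sigmoid_def, exp_neg, eq_div_iff (by positivity)]
  field_simp
  ring

lemma sigmoid_mul_exp_sub_le {x y : ℝ} (h : x ≤ y) : sigmoid y * exp (x - y) ≤ sigmoid x := by
  rw [sigmoid_eq_exp_div, sigmoid_eq_exp_div, div_mul_eq_mul_div, ← exp_add, add_sub_cancel]
  gcongr

end Real

lemma sigmoid_eq_real_sigmoid : _root_.sigmoid = Real.sigmoid :=
  funext fun x => (Real.sigmoid_eq_exp_div x).symm

lemma log_two_mul_two_rpow_xc : log 2 * (2 : ℝ) ^ xc = 1 := by
  rw [xc, rpow_logb two_pos (by norm_num) (by positivity)]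
  field_simp

lemma log_two_mul_two_rpow_eq (x : ℝ) : log 2 * (2 : ℝ) ^ x = exp (x - xc) ^ log 2 := by
  rw [← rpow_eq_exp_rpow_log two_pos, rpow_sub two_pos, eq_div_iff (by positivity),
    mul_right_comm, log_two_mul_two_rpow_xc, one_mul]

lemma xc_le_two_thirds : xc ≤ 2 / 3 := by
  rw [xc, logb_le_iff_le_rpow one_lt_two (by positivity),
    ← pow_le_pow_iff_left₀ (by positivity) (by positivity) three_ne_zero,
    ← rpow_mul_natCast zero_le_two, div_pow, one_pow, div_le_iff₀ (by positivity)]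
  norm_num
  have := pow_le_pow_left₀ (by norm_num) log_two_gt_d9.le 3
  linarith

-- `28 / 53` lies between `log (629 / 371) ≈ 0.52793` and `xc ≈ 0.52877`.
lemma twentyeight_div_fiftythree_le_xc : 28 / 53 ≤ xc := by
  rw [xc, le_logb_iff_rpow_le one_lt_two (by positivity),
    ← pow_le_pow_iff_left₀ (by positivity) (by positivity) (by norm_num : 53 ≠ 0),
    ← rpow_mul_natCast zero_le_two, div_pow, one_pow, le_div_iff₀ (by positivity)]
  norm_num
  have := pow_le_pow_left₀ (log_pos one_lt_two).le log_two_lt_d9.le 53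
  linarith

lemma exp_xc_le_two : exp xc ≤ 2 := by
  refine (exp_le_exp.2 xc_le_two_thirds).trans ?_
  rw [← pow_le_pow_iff_left₀ (exp_pos _).le zero_le_two three_ne_zero, ← exp_nat_mul]
  have := pow_le_pow_left₀ (exp_pos 1).le exp_one_lt_d9.le 2
  rw [← exp_nat_mul] at this
  norm_num at this ⊢
  linarith

lemma le_exp_xc : 629 / 371 ≤ exp xc := by
  refine le_trans ?_ (exp_le_exp.2 twentyeight_div_fiftythree_le_xc)
  rw [← pow_le_pow_iff_left₀ (by norm_num) (exp_pos _).le (by norm_num : 53 ≠ 0), ← exp_nat_mul]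
  have := pow_le_pow_left₀ (by norm_num) exp_one_gt_d9.le 28
  rw [← exp_nat_mul] at this
  norm_num at this ⊢
  linarith

lemma sigmoid_xc_le_log_two : Real.sigmoid xc ≤ log 2 := by
  rw [sigmoid_eq_exp_div, div_le_iff₀ (by positivity)]
  have := mul_le_mul_of_nonneg_right exp_xc_le_two (by linarith [log_two_lt_d9] : 0 ≤ 1 - log 2)
  linarith [log_two_gt_d9]

lemma sigmoid_le_log_two_mul_two_rpow (x : ℝ) : Real.sigmoid x ≤ log 2 * (2 : ℝ) ^ x := by
  have hlog : 1 / 2 < log 2 := by linarith [log_two_gt_d9]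
  have hamgm : exp x ^ (1 - log 2) ≤ log 2 * (1 + exp x) := by
    have := rpow_le_mul_add_one_sub (p := 1 - log 2) (exp_pos x).le
      (by linarith [log_two_lt_d9]) (by linarith)
    linarith [mul_pos (exp_pos x) (by linarith : 0 < 2 * log 2 - 1)]
  rw [sigmoid_eq_exp_div, div_le_iff₀ (by positivity)]
  calc exp x = exp x ^ (1 - log 2) * (2 : ℝ) ^ x := by
        rw [rpow_eq_exp_rpow_log two_pos, ← rpow_add (exp_pos x), sub_add_cancel, rpow_one]
    _ ≤ log 2 * (1 + exp x) * (2 : ℝ) ^ x := by gcongr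
    _ = log 2 * (2 : ℝ) ^ x * (1 + exp x) := by ring

lemma log_two_mul_two_rpow_sub_sigmoid_le {x : ℝ} (hx : x ≤ xc) :
    log 2 * (2 : ℝ) ^ x - Real.sigmoid x ≤ Real.sigmoid (-xc) := by
  set s := Real.sigmoid xc
  set t := exp (x - xc)
  have ht₀ : 0 < t := exp_pos _
  have ht₁ : t ≤ 1 := exp_le_one_iff.2 (by linarith)
  rw [sigmoid_neg]
  calc log 2 * (2 : ℝ) ^ x - Real.sigmoid x
      ≤ t ^ s - s * t := by
        rw [log_two_mul_two_rpow_eq]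
        have := rpow_le_rpow_of_exponent_ge ht₀ ht₁ sigmoid_xc_le_log_two
        linarith [sigmoid_mul_exp_sub_le hx]
    _ ≤ 1 - s := by
        linarith [rpow_le_mul_add_one_sub ht₀.le (sigmoid_nonneg xc) (sigmoid_le_one xc)]

theorem deriv_diff_bound (x : ℝ) :
    |PTSoftplus' x - _root_.sigmoid x| ≤ 1 / (1 + Real.exp xc) ∧
    1 / (1 + Real.exp xc) ≤ 0.371 := by
  have hbound : 1 / (1 + exp xc) = Real.sigmoid (-xc) := by
    rw [sigmoid_def, neg_neg, one_div]
  rw [hbound, sigmoid_eq_real_sigmoid, PTSoftplus']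
  refine ⟨?_, ?_⟩
  · split_ifs with hx
    · exact abs_le.2 ⟨by linarith [sigmoid_le_log_two_mul_two_rpow x, sigmoid_pos (-xc)],
        log_two_mul_two_rpow_sub_sigmoid_le hx.le⟩
    · rw [abs_of_nonneg (sub_nonneg.2 (sigmoid_le_one x)), ← sigmoid_neg]
      exact sigmoid_le (neg_le_neg (not_lt.1 hx))
  · rw [← hbound, div_le_iff₀ (by positivity)]
    linarith [le_exp_xc]
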